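/- Let ρ = 100ε with ε ∈ (ω(√(log n / n)), 0.001). Sample (P, G) where P ∈ {0,1}ⁿ is uniform and each pair (vᵢ, vⱼ) is an edge independently with probability 1/2 + ρ if Pᵢ = Pⱼ and 1/2 − ρ otherwise. Then with probability ≥ 1 − n^{−Ω(1)}: for every clustering 𝒞 = (C₁,…,C_k) of the vertices, either max_{i≠j} (|Cᵢ ∩ {t : Pₜ = 0}| + |Cⱼ ∩ {t : Pₜ = 1}|) > 0.9n, or cost_G(𝒞) ≥ cost_G(P) + εn², where cost_G(P) is the cost of the two-cluster clustering induced by P. -/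

import Mathlib

open Finset

-- Unordered pairs of distinct vertices, encoded as ordered pairs `(u,v)` with `u < v`.
abbrev PairIdx (n : ℕ) := {p : Fin n × Fin n // p.1 < p.2}

-- Correlation clustering cost of the clustering given by the labelling `c`
-- on the graph `g`: the number of non-edges inside clusters plus edges across clusters.
open Classical in
noncomputable def ccCost {n : ℕ} {L : Type*} (g : PairIdx n → Bool) (c : Fin n → L) : ℝ :=
  ∑ p : PairIdx n, if ((g p = true) ↔ (c p.val.1 = c p.val.2)) then 0 else 1

-- Density of the planted-partition distribution: `P ∈ {0,1}ⁿ` uniform, then each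
-- pair is an edge independently with probability `1/2 + ρ` if the endpoints agree
-- under `P` and `1/2 − ρ` otherwise.
open Classical in
noncomputable def plantedDensity (n : ℕ) (ρ : ℝ) (P : Fin n → Bool)
    (g : PairIdx n → Bool) : ℝ :=
  ((2 : ℝ) ^ n)⁻¹ * ∏ p : PairIdx n,
    (if ((g p = true) ↔ (P p.val.1 = P p.val.2)) then 1/2 + ρ else 1/2 - ρ)

-- Cut size of the partition `P` in the graph `g`.
open Classical in
noncomputable def cutSize {n : ℕ} (g : PairIdx n → Bool) (P : Fin n → Bool) : ℝ :=
  ∑ p : PairIdx n, if (g p = true ∧ P p.val.1 ≠ P p.val.2) then 1 else 0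


/-!
Fix the planted labelling `P`, with label classes of sizes `Z` and `O`, and call it balanced when
both are at least `0.4n`. For a clustering `c`, let `A` and `B` be the largest intersections of a
cluster with the two classes. Every vertex is separated by `c` from at least `Z - A`, resp.
`O - B`, vertices of its own label, so `c` and `P` disagree (same cluster versus same label) on
at least `Z(Z - A) + O(O - B)` ordered pairs. If the two largest cells lie in different clusters
and `c` does not align with `P`, then `A + B ≤ 0.9n` and this is at least `0.04n²`; if they lie
in the same cluster, that cluster contains `AB` disagreeing pairs, which is at least `0.04n²`
unless `A` or `B` is below `0.2n`, in which case the first count is.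
On each disagreeing pair the cost difference `cost_G(c) - cost_G(P)` is an independent `±1`
variable with mean `2ρ = 200ε`, so a Chernoff bound gives `cost_G(c) < cost_G(P) + εn²`
probability at most `exp(-2ε²n²)`. The union bound over the `nⁿ` clusterings costs a factor
`exp(n log n)`, which is absorbed since `ε²n² ≥ 4 n log n`. Unbalanced labellings have
probability `exp(-Ω(n))`, again by a Chernoff bound.
-/

open Real

theorem sum_filter_exists_le {ι α : Type*} [Fintype ι] [Fintype α] (p : ι → α → Prop)
    [∀ i, DecidablePred (p i)] [DecidablePred fun a => ∃ i, p i a] {f : α → ℝ}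
    (hf : ∀ a, 0 ≤ f a) :
    ∑ a with ∃ i, p i a, f a ≤ ∑ i, ∑ a with p i a, f a := by
  simp_rw [sum_filter]
  rw [sum_comm]
  have hnonneg : ∀ a i, 0 ≤ if p i a then f a else 0 := fun a _ => ite_nonneg (hf a) le_rfl
  refine sum_le_sum fun a _ => ?_
  split_ifs with h
  · obtain ⟨i, hpi⟩ := h
    calc f a = if p i a then f a else 0 := (if_pos hpi).symm
      _ ≤ ∑ j, if p j a then f a else 0 :=
        single_le_sum (f := fun j => if p j a then f a else 0) (fun j _ => hnonneg a j)
          (mem_univ i)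
  · exact sum_nonneg fun j _ => hnonneg a j

theorem sum_filter_prod_le_exp_mul_prod {ι β : Type*} [Fintype ι] [DecidableEq ι] [Fintype β]
    (w x : ι → β → ℝ) (hw : ∀ i b, 0 ≤ w i b) (a : ℝ) {t : ℝ} (ht : 0 ≤ t) :
    ∑ g : ι → β with ∑ i, x i (g i) ≤ a, ∏ i, w i (g i)
      ≤ exp (t * a) * ∏ i, ∑ b, w i b * exp (-(t * x i b)) := by
  rw [Fintype.prod_sum, mul_sum, sum_filter]
  refine sum_le_sum fun g _ => ?_
  have hw' : 0 ≤ ∏ i, w i (g i) := prod_nonneg fun i _ => hw i _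
  rw [prod_mul_distrib, ← exp_sum, ← mul_assoc, mul_comm (exp _), mul_assoc, ← exp_add]
  split_ifs with h
  · refine le_mul_of_one_le_right hw' (one_le_exp ?_)
    rw [sum_neg_distrib, ← mul_sum]
    nlinarith
  · exact mul_nonneg hw' (exp_nonneg _)

theorem exp_le_one_add_add_sq {x : ℝ} (hx : |x| ≤ 1) : exp x ≤ 1 + x + x ^ 2 := by
  linarith [(abs_le.1 (abs_exp_sub_one_sub_id_le hx)).2]

theorem biased_sign_mgf_le {ρ t : ℝ} (hρ : 0 ≤ ρ) (ht : 0 ≤ t) (ht1 : t ≤ 1) :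
    (1 / 2 + ρ) * exp (-t) + (1 / 2 - ρ) * exp t ≤ exp (t ^ 2 - 2 * ρ * t) := by
  have hpos := exp_le_one_add_add_sq (x := t) (by rwa [abs_of_nonneg ht])
  have hneg := exp_le_one_add_add_sq (x := -t) (by rwa [abs_neg, abs_of_nonneg ht])
  have hsinh : t ≤ sinh t := self_le_sinh_iff.2 ht
  rw [sinh_eq] at hsinh
  nlinarith [add_one_le_exp (t ^ 2 - 2 * ρ * t)]

theorem card_filter_prod_eq_two_mul {α : Type*} [Fintype α] [LinearOrder α]
    (R : α → α → Prop) [DecidableRel R] (hsymm : ∀ a b, R a b → R b a) (hirr : ∀ a, ¬R a a) :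
    #{q : α × α | R q.1 q.2} = 2 * #{p : {p : α × α // p.1 < p.2} | R p.1.1 p.1.2} := by
  have hlt : #{p : {p : α × α // p.1 < p.2} | R p.1.1 p.1.2}
      = #{q ∈ {q : α × α | R q.1 q.2} | q.1 < q.2} := by
    rw [← card_map (Function.Embedding.subtype _), filter_filter]
    congr 1
    ext ⟨a, b⟩
    simp
  have hswap : #{q ∈ {q : α × α | R q.1 q.2} | ¬q.1 < q.2}
      = #{q ∈ {q : α × α | R q.1 q.2} | q.1 < q.2} := by
    refine card_nbij' Prod.swap Prod.swap ?_ ?_ (fun _ _ => rfl) (fun _ _ => rfl) <;>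
    · rintro ⟨a, b⟩ h
      simp only [coe_filter, mem_filter, mem_univ, true_and, Set.mem_ofPred_eq, not_lt] at h ⊢
      obtain ⟨hab, hlt⟩ := h
      have hne : a ≠ b := fun h => hirr a (h ▸ hab)
      refine ⟨hsymm a b hab, ?_⟩
      first | exact hlt.le | exact lt_of_le_of_ne hlt hne.symm
  have := card_filter_add_card_filter_not (s := {q : α × α | R q.1 q.2}) (fun q => q.1 < q.2)
  omega

section Disagreement

variable {V K L : Type*} [Fintype V] [DecidableEq K] [DecidableEq L] (c : V → K) (P : V → L)

theorem card_mul_card_le_card_disagree {i : K} {b b' : L} (hb : b ≠ b') :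
    #{t | c t = i ∧ P t = b} * #{t | c t = i ∧ P t = b'}
      ≤ #{q : V × V | ¬(c q.1 = c q.2 ↔ P q.1 = P q.2)} := by
  rw [← card_product]
  refine card_le_card fun q hq => ?_
  simp only [mem_product, mem_filter, mem_univ, true_and] at hq ⊢
  rw [hq.1.1, hq.2.1, hq.1.2, hq.2.2]
  simpa using hb

theorem sum_card_mul_sub_le_card_disagree [Fintype L] {M : L → ℝ}
    (hM : ∀ i b, (#{t | c t = i ∧ P t = b} : ℝ) ≤ M b) :
    ∑ b, (#{t | P t = b} : ℝ) * (#{t | P t = b} - M b)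
      ≤ #{q : V × V | ¬(c q.1 = c q.2 ↔ P q.1 = P q.2)} := by
  have hfiber : ∀ u, (#{t | P t = P u} : ℝ) - M (P u) ≤ #{v | P v = P u ∧ c v ≠ c u} := by
    intro u
    have hsplit := card_filter_add_card_filter_not (s := {t | P t = P u}) (fun t => c t = c u)
    rw [filter_filter, filter_filter, filter_congr fun _ _ => and_comm] at hsplit
    rw [← hsplit]
    push_cast
    linarith [hM (c u) (P u)]
  calc ∑ b, (#{t | P t = b} : ℝ) * (#{t | P t = b} - M b)
      = ∑ u, ((#{t | P t = P u} : ℝ) - M (P u)) := by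
        rw [← sum_fiberwise univ P]
        refine sum_congr rfl fun b _ => ?_
        rw [sum_congr rfl fun u hu => by rw [(mem_filter.1 hu).2], sum_const, nsmul_eq_mul]
    _ ≤ ∑ u, (#{v | P v = P u ∧ c v ≠ c u} : ℝ) := sum_le_sum fun u _ => hfiber u
    _ = #{q : V × V | P q.2 = P q.1 ∧ c q.2 ≠ c q.1} := by
        rw [← Nat.cast_sum]
        simp only [card_filter, Fintype.sum_prod_type]
    _ ≤ _ := by exact_mod_cast card_le_card fun q => by simp +contextual [eq_comm]

end Disagreement

def disagreements {V K L : Type*} [LinearOrder V] [Fintype V] [DecidableEq K] [DecidableEq L]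
    (c : V → K) (P : V → L) : Finset {p : V × V // p.1 < p.2} :=
  {p | ¬(c p.1.1 = c p.1.2 ↔ P p.1.1 = P p.1.2)}

-- `Z, O, A, B` as in the header; `D` is the number of ordered disagreeing pairs.
theorem four_hundredths_sq_le {n Z O A B D : ℝ} (hZO : Z + O = n) (hZ : 0.4 * n ≤ Z)
    (hO : 0.4 * n ≤ O) (hA : 0 ≤ A) (hAZ : A ≤ Z) (hB : 0 ≤ B) (hBO : B ≤ O)
    (hsplit : Z * (Z - A) + O * (O - B) ≤ D) (hmix : A + B ≤ 0.9 * n ∨ A * B ≤ D) :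
    0.04 * n ^ 2 ≤ D := by
  rcases hmix with hAB | hAB
  · nlinarith
  rcases lt_or_ge A (0.2 * n) with hA2 | hA2
  · nlinarith
  rcases lt_or_ge B (0.2 * n) with hB2 | hB2
  · nlinarith
  nlinarith

abbrev AlignsWith {n : ℕ} {K : Type*} [DecidableEq K] (c : Fin n → K) (P : Fin n → Bool) :
    Prop :=
  ∃ i j : K, i ≠ j ∧
    0.9 * (n : ℝ) < (#{t | c t = i ∧ P t = false} : ℝ) + #{t | c t = j ∧ P t = true}

theorem card_disagreements_ge {n : ℕ} {K : Type*} [Fintype K] [DecidableEq K]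
    (c : Fin n → K) (P : Fin n → Bool) (hbal : ∀ b, 0.4 * (n : ℝ) ≤ #{t | P t = b})
    (hc : ¬AlignsWith c P) :
    0.02 * (n : ℝ) ^ 2 ≤ #(disagreements c P) := by
  have hD : #{q : Fin n × Fin n | ¬(c q.1 = c q.2 ↔ P q.1 = P q.2)}
      = 2 * #(disagreements c P) :=
    card_filter_prod_eq_two_mul (fun u v => ¬(c u = c v ↔ P u = P v))
      (fun u v h => by rwa [eq_comm, @eq_comm _ (P v)]) (by simp)
  suffices 0.04 * (n : ℝ) ^ 2 ≤ #{q : Fin n × Fin n | ¬(c q.1 = c q.2 ↔ P q.1 = P q.2)} by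
    rw [hD] at this
    push_cast at this
    linarith
  rcases isEmpty_or_nonempty K with hK | hK
  · obtain rfl : n = 0 := by
      by_contra hn
      exact hK.false (c ⟨0, by omega⟩)
    simp
  obtain ⟨i₀, hi₀⟩ := Finite.exists_max fun i => #{t | c t = i ∧ P t = false}
  obtain ⟨j₀, hj₀⟩ := Finite.exists_max fun j => #{t | c t = j ∧ P t = true}
  have hsplit := sum_card_mul_sub_le_card_disagree c P
    (M := fun b => if b then (#{t | c t = j₀ ∧ P t = true} : ℝ) else #{t | c t = i₀ ∧ P t = false})
    (by rintro i (_ | _) <;> simp only [Bool.false_eq_true, if_false, if_true, Nat.cast_le]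
        exacts [hi₀ i, hj₀ i])
  simp only [Fintype.sum_bool, if_true, Bool.false_eq_true, if_false] at hsplit
  have hZO : (#{t | P t = false} : ℝ) + #{t | P t = true} = n := by
    have := card_filter_add_card_filter_not (s := univ) fun t => P t = false
    simp only [Bool.not_eq_false, card_univ, Fintype.card_fin] at this
    exact_mod_cast this
  refine four_hundredths_sq_le (A := #{t | c t = i₀ ∧ P t = false})
    (B := #{t | c t = j₀ ∧ P t = true}) hZO (hbal false) (hbal true) (Nat.cast_nonneg _)
    (by exact_mod_cast card_le_card fun t => by simp +contextual) (Nat.cast_nonneg _)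
    (by exact_mod_cast card_le_card fun t => by simp +contextual) (by linarith) ?_
  by_cases hij : i₀ = j₀
  · subst hij
    exact .inr <| by
      exact_mod_cast card_mul_card_le_card_disagree c P (i := i₀) Bool.false_ne_true
  · exact .inl <| not_lt.1 fun h => hc ⟨i₀, j₀, hij, h⟩

noncomputable def edgeProb (ρ : ℝ) (s : Prop) [Decidable s] (b : Bool) : ℝ :=
  if (b = true ↔ s) then 1 / 2 + ρ else 1 / 2 - ρ

theorem edgeProb_nonneg {ρ : ℝ} (hρ : |ρ| ≤ 1 / 2) (s : Prop) [Decidable s] (b : Bool) :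
    0 ≤ edgeProb ρ s b := by
  unfold edgeProb
  split_ifs <;> linarith [abs_le.1 hρ]

theorem prod_edgeProb_nonneg {ι : Type*} [Fintype ι] {ρ : ℝ} (hρ : |ρ| ≤ 1 / 2) (s : ι → Prop)
    [DecidablePred s] (g : ι → Bool) : 0 ≤ ∏ i, edgeProb ρ (s i) (g i) :=
  prod_nonneg fun _ _ => edgeProb_nonneg hρ _ _

theorem sum_edgeProb (ρ : ℝ) (s : Prop) [Decidable s] : ∑ b, edgeProb ρ s b = 1 := by
  by_cases hs : s <;> simp [edgeProb, hs] <;> ring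

theorem sum_prod_edgeProb {ι : Type*} [Fintype ι] [DecidableEq ι] (ρ : ℝ) (s : ι → Prop)
    [DecidablePred s] : ∑ g : ι → Bool, ∏ i, edgeProb ρ (s i) (g i) = 1 := by
  rw [← Fintype.prod_sum]
  simp only [sum_edgeProb, prod_const_one]

theorem plantedDensity_eq (n : ℕ) (ρ : ℝ) (P : Fin n → Bool) (g : PairIdx n → Bool) :
    plantedDensity n ρ P g = ((2 : ℝ) ^ n)⁻¹ * ∏ p, edgeProb ρ (P p.1.1 = P p.1.2) (g p) :=
  rfl

theorem ccCost_sub_ccCost {n : ℕ} {K L : Type*} [DecidableEq K] [DecidableEq L]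
    (g : PairIdx n → Bool) (c : Fin n → K) (P : Fin n → L) :
    ccCost g c - ccCost g P = ∑ p, ((if (g p = true ↔ c p.1.1 = c p.1.2) then 0 else 1) -
      (if (g p = true ↔ P p.1.1 = P p.1.2) then 0 else 1) : ℝ) := by
  simp only [ccCost, ← sum_sub_distrib]
  congr!

theorem sum_filter_ccCost_lt_le {n : ℕ} {K L : Type*} [DecidableEq K] [DecidableEq L]
    (c : Fin n → K) (P : Fin n → L) {ρ t : ℝ} (hρ : 0 ≤ ρ) (hρ1 : ρ ≤ 1 / 2) (ht : 0 ≤ t)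
    (ht1 : t ≤ 1) (a : ℝ) :
    ∑ g : PairIdx n → Bool with ccCost g c < ccCost g P + a,
        ∏ p, edgeProb ρ (P p.1.1 = P p.1.2) (g p)
      ≤ exp (t * a + (t ^ 2 - 2 * ρ * t) * #(disagreements c P)) := by
  -- `x p b` vanishes unless `p` is a disagreement, where it is `1` with probability `1/2 + ρ`
  -- and `-1` otherwise.
  set x : PairIdx n → Bool → ℝ := fun p b =>
    (if (b = true ↔ c p.1.1 = c p.1.2) then 0 else 1) -
      (if (b = true ↔ P p.1.1 = P p.1.2) then 0 else 1)
  have hw : ∀ (p : PairIdx n) b, 0 ≤ edgeProb ρ (P p.1.1 = P p.1.2) b := fun p b =>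
    edgeProb_nonneg (abs_le.2 ⟨by linarith, hρ1⟩) _ b
  have hmgf : ∀ p : PairIdx n, ∑ b, edgeProb ρ (P p.1.1 = P p.1.2) b * exp (-(t * x p b))
      ≤ exp ((t ^ 2 - 2 * ρ * t) * if p ∈ disagreements c P then 1 else 0) := by
    intro p
    have := biased_sign_mgf_le hρ ht ht1
    by_cases hc : c p.1.1 = c p.1.2 <;> by_cases hP : P p.1.1 = P p.1.2 <;>
      simp [x, disagreements, edgeProb, hc, hP] <;> linarith
  calc _ ≤ ∑ g : PairIdx n → Bool with ∑ p, x p (g p) ≤ a,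
        ∏ p, edgeProb ρ (P p.1.1 = P p.1.2) (g p) := by
        refine sum_le_sum_of_subset_of_nonneg (fun g => ?_)
          fun g _ _ => prod_edgeProb_nonneg (abs_le.2 ⟨by linarith, hρ1⟩) _ g
        simp only [mem_filter, mem_univ, true_and, x]
        intro hg
        linarith [ccCost_sub_ccCost g c P]
    _ ≤ exp (t * a) * ∏ p, ∑ b, edgeProb ρ (P p.1.1 = P p.1.2) b * exp (-(t * x p b)) :=
        sum_filter_prod_le_exp_mul_prod _ x hw a ht
    _ ≤ exp (t * a) *
          ∏ p, exp ((t ^ 2 - 2 * ρ * t) * if p ∈ disagreements c P then 1 else 0) := by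
        refine mul_le_mul_of_nonneg_left (prod_le_prod (fun p _ => ?_) fun p _ => hmgf p)
          (exp_nonneg _)
        exact sum_nonneg fun b _ => mul_nonneg (hw p b) (exp_nonneg _)
    _ = _ := by rw [← exp_sum, ← exp_add, ← mul_sum, sum_boole]; simp

theorem sum_filter_exists_unaligned_cheap_le {n : ℕ} {K : Type*} [Fintype K] [DecidableEq K]
    {ε : ℝ} (hε0 : 0 ≤ ε) (hε1 : ε ≤ 1 / 200) (P : Fin n → Bool)
    (hbal : ∀ b, 0.4 * (n : ℝ) ≤ #{t | P t = b}) :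
    ∑ g : PairIdx n → Bool with
        ∃ c : Fin n → K, ¬AlignsWith c P ∧ ccCost g c < ccCost g P + ε * n ^ 2,
      ∏ p, edgeProb (100 * ε) (P p.1.1 = P p.1.2) (g p)
    ≤ Fintype.card K ^ n * exp (-(2 * ε ^ 2 * n ^ 2)) := by
  have hw := prod_edgeProb_nonneg (ρ := 100 * ε) (abs_le.2 ⟨by linarith, by linarith⟩)
    fun p : PairIdx n => P p.1.1 = P p.1.2
  refine (sum_filter_exists_le _ hw).trans ?_
  have hcard : (Fintype.card K : ℝ) ^ n = #(univ : Finset (Fin n → K)) := by simp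
  rw [hcard, ← nsmul_eq_mul]
  refine sum_le_card_nsmul _ _ _ fun c _ => ?_
  by_cases hc : AlignsWith c P
  · simp [hc, exp_nonneg]
  simp only [hc, not_false_eq_true, true_and]
  refine (sum_filter_ccCost_lt_le c P (by linarith) (by linarith) hε0 (by linarith) _).trans ?_
  have hD := card_disagreements_ge c P hbal hc
  gcongr
  nlinarith [sq_nonneg ε]

theorem card_filter_card_eq_le_le (n : ℕ) (b : Bool) :
    (#{P : Fin n → Bool | (#{t | P t = b} : ℝ) ≤ 0.4 * n} : ℝ) ≤ 2 ^ n * exp (-(n / 100)) := by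
  have hchernoff := sum_filter_prod_le_exp_mul_prod (fun _ _ => (1 : ℝ))
    (fun (_ : Fin n) b' => if b' = b then (1 : ℝ) else 0) (fun _ _ => zero_le_one) (0.4 * n)
    (t := 0.2) (by norm_num)
  simp only [prod_const_one, sum_const, nsmul_one, one_mul, sum_boole] at hchernoff
  -- `1 + exp (-0.2) = 2 exp (-0.1) cosh 0.1 ≤ 2 exp (-0.1 + 0.1 ^ 2 / 2)`
  have hfactor :
      ∑ b' : Bool, exp (-(0.2 * if b' = b then (1 : ℝ) else 0)) ≤ 2 * exp (-0.095) := by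
    have hcosh := cosh_le_exp_half_sq 0.1
    rw [cosh_eq] at hcosh
    have e1 : exp (-0.2) = exp (-0.1) * exp (-0.1) := by rw [← exp_add]; norm_num
    have e2 : exp (-0.095) = exp (-0.1) * exp (0.1 ^ 2 / 2) := by rw [← exp_add]; norm_num
    have e3 : exp (-0.1) * exp 0.1 = 1 := by rw [← exp_add]; norm_num
    simp only [Fintype.sum_bool]
    cases b <;> simp <;> nlinarith [exp_pos (-0.1)]
  calc (#{P : Fin n → Bool | (#{t | P t = b} : ℝ) ≤ 0.4 * n} : ℝ)
      ≤ exp (0.2 * (0.4 * n)) *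
          ∏ _t : Fin n, ∑ b' : Bool, exp (-(0.2 * if b' = b then (1 : ℝ) else 0)) := hchernoff
    _ ≤ exp (0.2 * (0.4 * n)) * (2 * exp (-0.095)) ^ n := by
        rw [prod_const, card_univ, Fintype.card_fin]
        gcongr
    _ ≤ 2 ^ n * exp (-(n / 100)) := by
        rw [mul_pow, ← exp_nat_mul, mul_left_comm, ← exp_add]
        gcongr
        linarith

theorem card_filter_not_balanced_le (n : ℕ) :
    (#{P : Fin n → Bool | ¬∀ b, 0.4 * (n : ℝ) ≤ #{t | P t = b}} : ℝ)
      ≤ 2 * (2 ^ n * exp (-(n / 100))) := by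
  calc (#{P : Fin n → Bool | ¬∀ b, 0.4 * (n : ℝ) ≤ #{t | P t = b}} : ℝ)
      ≤ #{P : Fin n → Bool | ∃ b, (#{t | P t = b} : ℝ) ≤ 0.4 * n} := by
        gcongr with P
        simp only [not_forall, not_le]
        exact fun ⟨b, hb⟩ => ⟨b, hb.le⟩
    _ ≤ ∑ b : Bool, (#{P : Fin n → Bool | (#{t | P t = b} : ℝ) ≤ 0.4 * n} : ℝ) := by
        simpa using sum_filter_exists_le
          (fun b (P : Fin n → Bool) => (#{t | P t = b} : ℝ) ≤ 0.4 * n)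
          (f := fun _ => (1 : ℝ)) fun _ => zero_le_one
    _ ≤ ∑ _b : Bool, 2 ^ n * exp (-(n / 100)) :=
        sum_le_sum fun b _ => card_filter_card_eq_le_le n b
    _ = 2 * (2 ^ n * exp (-(n / 100))) := by simp

theorem one_sub_le_sum_prod_edgeProb_mul_ite {n : ℕ} {ε : ℝ} (hε0 : 0 ≤ ε)
    (hε1 : ε ≤ 1 / 200) (P : Fin n → Bool) :
    1 - n ^ n * exp (-(2 * ε ^ 2 * n ^ 2))
        - (if ∀ b, 0.4 * (n : ℝ) ≤ #{t | P t = b} then 0 else 1)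
      ≤ ∑ g : PairIdx n → Bool, (∏ p, edgeProb (100 * ε) (P p.1.1 = P p.1.2) (g p)) *
          if ∀ c : Fin n → Fin n, AlignsWith c P ∨ ccCost g P + ε * n ^ 2 ≤ ccCost g c
          then 1 else 0 := by
  have hw := prod_edgeProb_nonneg (ρ := 100 * ε) (abs_le.2 ⟨by linarith, by linarith⟩)
    fun p : PairIdx n => P p.1.1 = P p.1.2
  have hmass := sum_filter_add_sum_filter_not univ
    (fun g => ∀ c : Fin n → Fin n, AlignsWith c P ∨ ccCost g P + ε * n ^ 2 ≤ ccCost g c)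
    fun g => ∏ p, edgeProb (100 * ε) (P p.1.1 = P p.1.2) (g p)
  rw [sum_prod_edgeProb] at hmass
  simp only [mul_ite, mul_one, mul_zero, ← sum_filter]
  have hpos : 0 ≤ (n : ℝ) ^ n * exp (-(2 * ε ^ 2 * n ^ 2)) := by positivity
  split_ifs with hbal
  · have hbad := sum_filter_exists_unaligned_cheap_le (K := Fin n) hε0 hε1 P hbal
    rw [Fintype.card_fin] at hbad
    have hbad' : ∑ g : PairIdx n → Bool with
          ¬∀ c : Fin n → Fin n, AlignsWith c P ∨ ccCost g P + ε * n ^ 2 ≤ ccCost g c,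
        ∏ p, edgeProb (100 * ε) (P p.1.1 = P p.1.2) (g p)
          ≤ n ^ n * exp (-(2 * ε ^ 2 * n ^ 2)) := by
      convert hbad using 3
      simp only [not_forall, not_or, not_le]
    linarith
  · exact le_trans (by linarith) (sum_nonneg fun g _ => hw g)

theorem one_sub_le_sum_plantedDensity_mul_ite {n : ℕ} {ε : ℝ} (hε0 : 0 ≤ ε)
    (hε1 : ε ≤ 1 / 200) :
    1 - n ^ n * exp (-(2 * ε ^ 2 * n ^ 2)) - 2 * exp (-(n / 100))
      ≤ ∑ P : Fin n → Bool, ∑ g : PairIdx n → Bool, plantedDensity n (100 * ε) P g *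
          if ∀ c : Fin n → Fin n, AlignsWith c P ∨ ccCost g P + ε * n ^ 2 ≤ ccCost g c
          then 1 else 0 := by
  have h2n : (0 : ℝ) < 2 ^ n := by positivity
  have hunbal : ((2 : ℝ) ^ n)⁻¹ * #{P : Fin n → Bool | ¬∀ b, 0.4 * (n : ℝ) ≤ #{t | P t = b}}
      ≤ 2 * exp (-(n / 100)) := by
    rw [inv_mul_le_iff₀ h2n]
    linarith [card_filter_not_balanced_le n]
  calc 1 - n ^ n * exp (-(2 * ε ^ 2 * n ^ 2)) - 2 * exp (-(n / 100))
      ≤ 1 - n ^ n * exp (-(2 * ε ^ 2 * n ^ 2))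
          - ((2 : ℝ) ^ n)⁻¹ * #{P : Fin n → Bool | ¬∀ b, 0.4 * (n : ℝ) ≤ #{t | P t = b}} := by
        linarith
    _ = ∑ P : Fin n → Bool, ((2 : ℝ) ^ n)⁻¹ * (1 - n ^ n * exp (-(2 * ε ^ 2 * n ^ 2))
          - if ∀ b, 0.4 * (n : ℝ) ≤ #{t | P t = b} then 0 else 1) := by
        rw [← mul_sum, sum_sub_distrib, sum_ite]
        simp only [sum_const, card_univ, Fintype.card_pi, Fintype.card_bool, prod_const,
          Fintype.card_fin, nsmul_eq_mul, Nat.cast_pow, Nat.cast_ofNat, mul_one, mul_zero,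
          zero_add]
        field_simp
    _ ≤ ∑ P : Fin n → Bool, ((2 : ℝ) ^ n)⁻¹ * ∑ g : PairIdx n → Bool,
          (∏ p, edgeProb (100 * ε) (P p.1.1 = P p.1.2) (g p)) *
          if ∀ c : Fin n → Fin n, AlignsWith c P ∨ ccCost g P + ε * n ^ 2 ≤ ccCost g c
          then 1 else 0 := sum_le_sum fun P _ =>
        mul_le_mul_of_nonneg_left (one_sub_le_sum_prod_edgeProb_mul_ite hε0 hε1 P) (by positivity)
    _ = _ := by simp only [plantedDensity_eq, mul_sum, mul_assoc]

theorem pow_mul_exp_neg_le {n : ℕ} {ε : ℝ} (hn : 2 ≤ n) (hε : 2 ≤ ε * √(n / log n)) :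
    (n : ℝ) ^ n * exp (-(2 * ε ^ 2 * n ^ 2)) ≤ (2 * (n : ℝ))⁻¹ := by
  have hn' : (2 : ℝ) ≤ n := by exact_mod_cast hn
  have hlog2 : log 2 ≤ log n := log_le_log (by norm_num) hn'
  have hlog : 0 < log n := (log_pos (by norm_num)).trans_le hlog2
  have hsq : 4 ≤ ε ^ 2 * (n / log n) := by
    have := pow_le_pow_left₀ (by norm_num) hε 2
    rw [mul_pow, sq_sqrt (by positivity)] at this
    linarith
  have hεn : 4 * (n * log n) ≤ ε ^ 2 * n ^ 2 := by
    rw [mul_div_assoc', le_div_iff₀ hlog] at hsq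
    nlinarith
  calc (n : ℝ) ^ n * exp (-(2 * ε ^ 2 * n ^ 2))
      ≤ exp (n * log n) * exp (-(8 * (n * log n))) := by
        rw [exp_nat_mul, exp_log (by positivity)]
        exact mul_le_mul_of_nonneg_left (exp_le_exp.2 (by linarith)) (by positivity)
    _ = exp (-(7 * n * log n)) := by rw [← exp_add]; ring_nf
    _ ≤ exp (-log (2 * n)) := by
        gcongr
        rw [log_mul (by norm_num) (by positivity)]
        nlinarith
    _ = (2 * (n : ℝ))⁻¹ := by rw [exp_neg, exp_log (by positivity)]

theorem eventually_two_mul_exp_neg_le :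
    ∀ᶠ n : ℕ in Filter.atTop, 2 * exp (-(n / 100)) ≤ (2 * (n : ℝ))⁻¹ := by
  have hlim := (tendsto_pow_mul_exp_neg_atTop_nhds_zero 1).comp
    (tendsto_natCast_atTop_atTop.atTop_div_const (by norm_num : (0 : ℝ) < 100))
  filter_upwards [hlim.eventually (ge_mem_nhds (by norm_num : (0 : ℝ) < 1 / 400)),
    Filter.eventually_gt_atTop 0] with n hn hpos
  simp only [Function.comp_apply, pow_one] at hn
  have : (0 : ℝ) < n := by exact_mod_cast hpos
  rw [← one_div, le_div_iff₀ (by positivity)]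
  nlinarith

open Classical in
theorem planted_cc_dichotomy (ε : ℕ → ℝ) (hub : ∀ n, ε n < 0.001)
    (hlb : Filter.Tendsto (fun n => ε n * Real.sqrt ((n : ℝ) / Real.log n))
      Filter.atTop Filter.atTop) :
    ∃ α : ℝ, 0 < α ∧ ∃ N : ℕ, ∀ n : ℕ, N ≤ n →
      1 - (n : ℝ) ^ (-α) ≤
        ∑ P : Fin n → Bool, ∑ g : PairIdx n → Bool,
          plantedDensity n (100 * ε n) P g *
            (if ∀ c : Fin n → Fin n,
                (∃ i j : Fin n, i ≠ j ∧
                  0.9 * (n : ℝ) <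
                    ((Finset.univ.filter (fun t => c t = i ∧ P t = false)).card : ℝ)
                      + ((Finset.univ.filter (fun t => c t = j ∧ P t = true)).card : ℝ))
                ∨ ccCost g P + ε n * (n : ℝ) ^ 2 ≤ ccCost g c
             then 1 else 0) := by
  refine ⟨1, one_pos, Filter.eventually_atTop.1 ?_⟩
  filter_upwards [hlb.eventually_ge_atTop 2, Filter.eventually_ge_atTop 2,
    eventually_two_mul_exp_neg_le] with n hεn hn hexp
  have hε : 0 < ε n := pos_of_mul_pos_left (by linarith) (sqrt_nonneg _)
  refine le_trans ?_ (one_sub_le_sum_plantedDensity_mul_ite hε.le (by linarith [hub n]))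
  have hunion := pow_mul_exp_neg_le hn hεn
  have hhalf : (2 * (n : ℝ))⁻¹ + (2 * (n : ℝ))⁻¹ = (n : ℝ)⁻¹ := by field_simp; ring
  rw [rpow_neg_one]
  linarith
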